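/- arXiv:2508.03205 — 3 statements merged into one kernel-verified Lean document; each statement's English description precedes it below -/
import Mathlib

section
/- Let c > 0 and let U : ℝ^d → [0, ∞) be a measurable function such that e^{−U} belongs to L¹(ℝ^d) ∩ L²(ℝ^d). Then the double integral I := ∫_{ℝ^d} ∫_{ℝ^d} |V(x − y)| e^{−c V(x − y)} e^{−U(x)} e^{−U(y)} dx dy is finite. -/
open MeasureTheory

/-- The Lennard-Jones potential `V(x) = A/|x|^α − B/|x|^β` on `ℝ^d` (real-power exponents). -/
noncomputable def LJpot (d : ℕ) (A B α β : ℝ) (x : EuclideanSpace ℝ (Fin d)) : ℝ :=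
  A / ‖x‖ ^ α - B / ‖x‖ ^ β

/-- `|t| e^{-ct}` is bounded when `t` is bounded below. -/
lemma abs_mul_exp_neg_le {c M t : ℝ} (hc : 0 < c) (hM : 0 ≤ M) (ht : -M ≤ t) :
    |t| * Real.exp (-(c * t)) ≤ max (1 / c) (M * Real.exp (c * M)) := by
  rcases le_or_gt 0 t with h0 | h0
  · refine le_trans ?_ (le_max_left _ _)
    rw [abs_of_nonneg h0, Real.exp_neg]
    have h1 : c * t ≤ Real.exp (c * t) := by linarith [Real.add_one_le_exp (c * t)]
    have hE : 0 < Real.exp (c * t) := Real.exp_pos _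
    rw [mul_inv_le_iff₀ hE, one_div_mul_eq_div, le_div_iff₀ hc]
    nlinarith
  · refine le_trans ?_ (le_max_right _ _)
    rw [abs_of_neg h0]
    have h1 : -t ≤ M := by linarith
    have h2 : Real.exp (-(c * t)) ≤ Real.exp (c * M) := by
      apply Real.exp_le_exp.2; nlinarith
    exact mul_le_mul h1 h2 (Real.exp_pos _).le hM

/-- The Lennard-Jones potential is bounded below. -/
lemma LJpot_lower_bound (d : ℕ) {A B α β : ℝ} (hA : 0 < A) (hB : 0 < B)
    (hβ : 0 ≤ β) (hβα : β < α) (z : EuclideanSpace ℝ (Fin d)) :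
    -(B / ((A / B) ^ (α - β)⁻¹) ^ β) ≤ LJpot d A B α β z := by
  set r0 : ℝ := (A / B) ^ (α - β)⁻¹ with hr0
  have hAB : 0 < A / B := div_pos hA hB
  have hr0pos : 0 < r0 := Real.rpow_pos_of_pos hAB _
  have hαβ : (0:ℝ) < α - β := by linarith
  have hr0pow : r0 ^ (α - β) = A / B := Real.rpow_inv_rpow hAB.le (ne_of_gt hαβ)
  set M : ℝ := B / r0 ^ β with hM
  have hMpos : 0 < M := div_pos hB (Real.rpow_pos_of_pos hr0pos _)
  unfold LJpot
  set r : ℝ := ‖z‖ with hr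
  have hrnn : 0 ≤ r := norm_nonneg _
  rcases eq_or_lt_of_le hrnn with h0 | h0
  · -- r = 0
    rcases eq_or_lt_of_le hβ with hb0 | hb0
    · -- β = 0
      rw [← h0, ← hb0]
      simp only [Real.rpow_zero]
      rw [Real.zero_rpow (by linarith : α ≠ 0)]
      simp only [div_zero, div_one, zero_sub]
      rw [hM, ← hb0]
      simp
    · rw [← h0, Real.zero_rpow (by linarith : α ≠ 0),
        Real.zero_rpow (ne_of_gt hb0)]
      simp only [div_zero, sub_zero]
      linarith
  · rcases le_or_gt r r0 with hle | hgt
    · -- 0 ≤ V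
      have hra : 0 < r ^ α := Real.rpow_pos_of_pos h0 _
      have hrb : 0 < r ^ β := Real.rpow_pos_of_pos h0 _
      have key : B / r ^ β ≤ A / r ^ α := by
        rw [div_le_div_iff₀ hrb hra]
        have h1 : r ^ (α - β) ≤ r0 ^ (α - β) :=
          Real.rpow_le_rpow hrnn hle hαβ.le
        have h2 : r ^ α = r ^ β * r ^ (α - β) := by
          rw [← Real.rpow_add h0]; ring_nf
        rw [h2]
        calc B * (r ^ β * r ^ (α - β)) ≤ B * (r ^ β * (A / B)) := by
              rw [hr0pow] at h1
              have := mul_le_mul_of_nonneg_left h1 hrb.le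
              nlinarith
          _ = A * r ^ β := by field_simp
      linarith [div_nonneg hA.le hra.le]
    · -- r > r0
      have hra : 0 ≤ A / r ^ α := div_nonneg hA.le (Real.rpow_pos_of_pos h0 _).le
      have hrb : r0 ^ β ≤ r ^ β := Real.rpow_le_rpow hr0pos.le hgt.le hβ
      have : B / r ^ β ≤ M := by
        rw [hM]
        exact div_le_div_of_nonneg_left hB.le (Real.rpow_pos_of_pos hr0pos _) hrb
      linarith

/-- if `c > 0` and `U : ℝ^d → [0,∞)` is measurable with `e^{−U} ∈ L¹ ∩ L²`, then
`∫∫ |V(x−y)| e^{−cV(x−y)} e^{−U(x)} e^{−U(y)} dx dy < ∞`. -/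
theorem LJpot_gibbs_pair_energy_finite (d : ℕ) (hd : 1 ≤ d) (A B α β c : ℝ)
    (hA : 0 < A) (hB : 0 < B) (hβ : 0 ≤ β) (hβα : β < α) (hα : 0 < α) (hc : 0 < c)
    (U : EuclideanSpace ℝ (Fin d) → ℝ)
    (hUmeas : Measurable U) (hUnn : ∀ x, 0 ≤ U x)
    (hU1 : Integrable (fun x => Real.exp (-U x)))
    (hU2 : MemLp (fun x => Real.exp (-U x)) 2) :
    ∫⁻ x, ∫⁻ y, ENNReal.ofReal (|LJpot d A B α β (x - y)| *
      Real.exp (-(c * LJpot d A B α β (x - y))) *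
      Real.exp (-U x) * Real.exp (-U y)) < ⊤ := by
  set M : ℝ := B / ((A / B) ^ (α - β)⁻¹) ^ β with hMdef
  have hMpos : 0 < M :=
    div_pos hB (Real.rpow_pos_of_pos (Real.rpow_pos_of_pos (div_pos hA hB) _) _)
  set C : ℝ := max (1 / c) (M * Real.exp (c * M)) with hCdef
  have hCnn : 0 ≤ C := le_trans (by positivity) (le_max_left _ _)
  have hK : ∀ z : EuclideanSpace ℝ (Fin d),
      |LJpot d A B α β z| * Real.exp (-(c * LJpot d A B α β z)) ≤ C :=
    fun z => abs_mul_exp_neg_le hc hMpos.le (LJpot_lower_bound d hA hB hβ hβα z)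
  set f : EuclideanSpace ℝ (Fin d) → ENNReal :=
    fun x => ENNReal.ofReal (Real.exp (-U x)) with hf
  have hI : ∫⁻ x, f x < ⊤ := hU1.lintegral_lt_top
  have hfx_ne_top : ∀ x, f x ≠ ⊤ := fun x => ENNReal.ofReal_ne_top
  have step1 : ∀ x, (∫⁻ y, ENNReal.ofReal (|LJpot d A B α β (x - y)| *
      Real.exp (-(c * LJpot d A B α β (x - y))) *
      Real.exp (-U x) * Real.exp (-U y))) ≤
      (ENNReal.ofReal C * f x) * ∫⁻ y, f y := by
    intro x
    rw [← lintegral_const_mul' _ _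
      (ENNReal.mul_ne_top ENNReal.ofReal_ne_top (hfx_ne_top x))]
    apply lintegral_mono
    intro y
    simp only [hf]
    rw [← ENNReal.ofReal_mul hCnn,
      ← ENNReal.ofReal_mul (by positivity : (0:ℝ) ≤ C * Real.exp (-U x))]
    apply ENNReal.ofReal_le_ofReal
    nlinarith [Real.exp_pos (-U x), Real.exp_pos (-U y),
      mul_le_mul_of_nonneg_right (hK (x - y))
        (mul_nonneg (Real.exp_pos (-U x)).le (Real.exp_pos (-U y)).le)]
  calc ∫⁻ x, ∫⁻ y, ENNReal.ofReal (|LJpot d A B α β (x - y)| *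
        Real.exp (-(c * LJpot d A B α β (x - y))) *
        Real.exp (-U x) * Real.exp (-U y))
      ≤ ∫⁻ x, (ENNReal.ofReal C * f x) * ∫⁻ y, f y := lintegral_mono step1
    _ = ∫⁻ x, (ENNReal.ofReal C * (∫⁻ y, f y)) * f x := by
        congr 1; funext x; ring
    _ = (ENNReal.ofReal C * (∫⁻ y, f y)) * ∫⁻ x, f x := by
        rw [lintegral_const_mul' _ _
          (ENNReal.mul_ne_top ENNReal.ofReal_ne_top hI.ne)]
    _ < ⊤ := by
        apply ENNReal.mul_lt_top
        · exact ENNReal.mul_lt_top ENNReal.ofReal_lt_top hI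
        · exact hI
end

section
/- Let N ≥ 2, let (F_{ij})_{1≤i,j≤N, i≠j} be vectors in ℝ^d with F_{ji} = −F_{ij} for all i ≠ j, and let M(i,j,k) ≥ 0 be reals indexed by triples 1 ≤ i < j < k ≤ N such that F_{ij} · (F_{ik} − F_{jk}) ≥ −M(i,j,k) for all 1 ≤ i < j < k ≤ N. Then ∑_{i=1}^N |∑_{j≠i} F_{ij}|² ≥ ∑_{1≤i<j≤N} |F_{ij}|² − 2 ∑_{1≤i<j<k≤N} M(i,j,k). -/
open Finset
open scoped RealInnerProductSpace

section AuxHelpers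

variable {ι : Type*} [LinearOrder ι] [DecidableEq ι] {β : Type*} [AddCommMonoid β]

private lemma myIteSum {α : Type*} {c : Prop} [Decidable c] (s : Finset α) (f : α → β) :
    (if c then ∑ x ∈ s, f x else 0) = ∑ x ∈ s, if c then f x else 0 := by
  split_ifs <;> simp

private lemma mySwapLt (s : Finset ι) (f : ι → ι → β) :
    ∑ i ∈ s, ∑ j ∈ s.filter (fun j => j < i), f i j
      = ∑ i ∈ s, ∑ j ∈ s.filter (fun j => i < j), f j i := by
  simp only [Finset.sum_filter]
  exact Finset.sum_comm

private lemma mySplitNe (s : Finset ι) (i : ι) (f : ι → β) :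
    ∑ j ∈ s.filter (fun j => j ≠ i), f j
      = ∑ j ∈ s.filter (fun j => j < i), f j + ∑ j ∈ s.filter (fun j => i < j), f j := by
  simp only [Finset.sum_filter, ← Finset.sum_add_distrib]
  refine Finset.sum_congr rfl fun j _ => ?_
  rcases lt_trichotomy j i with h | h | h
  · simp [h, h.ne, not_lt.mpr h.le]
  · simp [h]
  · simp [h, h.ne', not_lt.mpr h.le]

private lemma mySplitTwoNe (s : Finset ι) {i j : ι} (hij : i < j) (f : ι → β) :
    ∑ k ∈ s.filter (fun k => k ≠ i ∧ k ≠ j), f k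
      = ∑ k ∈ s.filter (fun k => k < i), f k
        + ∑ k ∈ s.filter (fun k => i < k ∧ k < j), f k
        + ∑ k ∈ s.filter (fun k => j < k), f k := by
  simp only [Finset.sum_filter, ← Finset.sum_add_distrib]
  refine Finset.sum_congr rfl fun k _ => ?_
  rcases lt_trichotomy k i with h | h | h
  · simp [h, h.ne, h.trans hij, (h.trans hij).ne, not_lt.mpr h.le, not_lt.mpr (h.trans hij).le,
      lt_asymm h]
  · simp [h, lt_irrefl, hij, not_lt.mpr hij.le]
  · rcases lt_trichotomy k j with h2 | h2 | h2
    · simp [h.ne', h2.ne, h, h2, lt_asymm h, not_lt.mpr h2.le]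
    · simp [h2, lt_irrefl, h, lt_asymm h, lt_asymm hij]
    · simp [h.ne', h2.ne', h, h2, lt_asymm h, lt_asymm h2]

variable {E : Type*} [NormedAddCommGroup E] [InnerProductSpace ℝ E]

private lemma myNormSumSq (s : Finset ι) (v : ι → E) :
    ‖∑ a ∈ s, v a‖ ^ 2
      = ∑ a ∈ s, ‖v a‖ ^ 2
        + 2 * ∑ a ∈ s, ∑ b ∈ s.filter (fun b => a < b), ⟪v a, v b⟫ := by
  have h1 : ‖∑ a ∈ s, v a‖ ^ 2 = ∑ a ∈ s, ∑ b ∈ s, ⟪v a, v b⟫ := by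
    rw [← real_inner_self_eq_norm_sq, sum_inner]
    exact Finset.sum_congr rfl fun a _ => inner_sum _ _ _
  have h2 : ∀ a ∈ s, ∑ b ∈ s, ⟪v a, v b⟫
      = ‖v a‖ ^ 2 + ∑ b ∈ s.filter (fun b => b ≠ a), ⟪v a, v b⟫ := by
    intro a ha
    rw [← Finset.sum_filter_add_sum_filter_not s (fun b => b = a)]
    congr 1
    rw [Finset.filter_eq', if_pos ha, Finset.sum_singleton, real_inner_self_eq_norm_sq]
  have h3 : ∑ a ∈ s, ∑ b ∈ s.filter (fun b => b ≠ a), ⟪v a, v b⟫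
      = 2 * ∑ a ∈ s, ∑ b ∈ s.filter (fun b => a < b), ⟪v a, v b⟫ := by
    calc ∑ a ∈ s, ∑ b ∈ s.filter (fun b => b ≠ a), ⟪v a, v b⟫
        = ∑ a ∈ s, (∑ b ∈ s.filter (fun b => b < a), ⟪v a, v b⟫
            + ∑ b ∈ s.filter (fun b => a < b), ⟪v a, v b⟫) :=
          Finset.sum_congr rfl fun a _ => mySplitNe s a _
      _ = ∑ a ∈ s, ∑ b ∈ s.filter (fun b => b < a), ⟪v a, v b⟫
            + ∑ a ∈ s, ∑ b ∈ s.filter (fun b => a < b), ⟪v a, v b⟫ := Finset.sum_add_distrib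
      _ = 2 * ∑ a ∈ s, ∑ b ∈ s.filter (fun b => a < b), ⟪v a, v b⟫ := by
          rw [mySwapLt s (fun a b => ⟪v a, v b⟫), two_mul]
          congr 1
          exact Finset.sum_congr rfl fun a _ => Finset.sum_congr rfl fun b _ =>
            real_inner_comm _ _
  rw [h1, Finset.sum_congr rfl h2, Finset.sum_add_distrib, h3]

end AuxHelpers

/-- for antisymmetric vectors `F_{ij}` with
`F_{ij} · (F_{ik} − F_{jk}) ≥ −M(i,j,k)` for all `i < j < k` (with `M(i,j,k) ≥ 0`), one has
`∑ᵢ |∑_{j≠i} F_{ij}|² ≥ ∑_{i<j} |F_{ij}|² − 2 ∑_{i<j<k} M(i,j,k)`. -/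
theorem sum_sq_forces_lower_bound (d N : ℕ) (hd : 1 ≤ d) (hN : 2 ≤ N)
    (F : Fin N → Fin N → EuclideanSpace ℝ (Fin d))
    (hanti : ∀ i j : Fin N, i ≠ j → F j i = -F i j)
    (M : Fin N → Fin N → Fin N → ℝ)
    (hMnn : ∀ i j k : Fin N, i < j → j < k → 0 ≤ M i j k)
    (hM : ∀ i j k : Fin N, i < j → j < k →
      ⟪F i j, F i k - F j k⟫ ≥ -M i j k) :
    ∑ i : Fin N, ‖∑ j ∈ univ.filter (fun j => j ≠ i), F i j‖ ^ 2 ≥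
      (∑ i : Fin N, ∑ j ∈ univ.filter (fun j => i < j), ‖F i j‖ ^ 2) -
        2 * ∑ i : Fin N, ∑ j ∈ univ.filter (fun j => i < j),
          ∑ k ∈ univ.filter (fun k => j < k), M i j k := by
  classical
  set S : ℝ := ∑ i : Fin N, ∑ j ∈ univ.filter (fun j => i < j), ‖F i j‖ ^ 2 with hS
  -- Step 1: expansion of the left-hand side
  have expand : ∑ i : Fin N, ‖∑ j ∈ univ.filter (fun j => j ≠ i), F i j‖ ^ 2
      = 2 * S + ∑ i : Fin N, ∑ j ∈ univ.filter (fun j => i < j),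
          ∑ k ∈ univ.filter (fun k => k ≠ i ∧ k ≠ j), ⟪F i j, F i k - F j k⟫ := by
    have e1 : ∀ i : Fin N, ‖∑ j ∈ univ.filter (fun j => j ≠ i), F i j‖ ^ 2
        = ∑ j ∈ univ.filter (fun j => j ≠ i),
            ∑ k ∈ univ.filter (fun k => k ≠ i), ⟪F i j, F i k⟫ := by
      intro i
      rw [← real_inner_self_eq_norm_sq, sum_inner]
      exact Finset.sum_congr rfl fun j _ => inner_sum _ _ _
    have e2 : ∀ i : Fin N, ∀ j ∈ univ.filter (fun j => j ≠ i),
        ∑ k ∈ univ.filter (fun k => k ≠ i), ⟪F i j, F i k⟫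
          = ‖F i j‖ ^ 2 + ∑ k ∈ univ.filter (fun k => k ≠ i ∧ k ≠ j), ⟪F i j, F i k⟫ := by
      intro i j hj
      have hset : (univ.filter (fun k : Fin N => k ≠ i)).erase j
          = univ.filter (fun k => k ≠ i ∧ k ≠ j) := by
        ext k; simp [and_comm]
      rw [← Finset.add_sum_erase _ _ hj, real_inner_self_eq_norm_sq, hset]
    have e3 : ∑ i : Fin N, ‖∑ j ∈ univ.filter (fun j => j ≠ i), F i j‖ ^ 2
        = ∑ i : Fin N, ∑ j ∈ univ.filter (fun j => j ≠ i), ‖F i j‖ ^ 2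
          + ∑ i : Fin N, ∑ j ∈ univ.filter (fun j => j ≠ i),
              ∑ k ∈ univ.filter (fun k => k ≠ i ∧ k ≠ j), ⟪F i j, F i k⟫ := by
      rw [← Finset.sum_add_distrib]
      refine Finset.sum_congr rfl fun i _ => ?_
      rw [e1 i, Finset.sum_congr rfl (e2 i), Finset.sum_add_distrib]
    -- diagonal part equals 2 * S
    have ediag : ∑ i : Fin N, ∑ j ∈ univ.filter (fun j => j ≠ i), ‖F i j‖ ^ 2 = 2 * S := by
      calc ∑ i : Fin N, ∑ j ∈ univ.filter (fun j => j ≠ i), ‖F i j‖ ^ 2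
          = ∑ i : Fin N, (∑ j ∈ univ.filter (fun j => j < i), ‖F i j‖ ^ 2
              + ∑ j ∈ univ.filter (fun j => i < j), ‖F i j‖ ^ 2) :=
            Finset.sum_congr rfl fun i _ => mySplitNe univ i _
        _ = ∑ i : Fin N, ∑ j ∈ univ.filter (fun j => j < i), ‖F i j‖ ^ 2
              + ∑ i : Fin N, ∑ j ∈ univ.filter (fun j => i < j), ‖F i j‖ ^ 2 :=
            Finset.sum_add_distrib
        _ = 2 * S := by
            rw [mySwapLt univ (fun i j => ‖F i j‖ ^ 2), two_mul, hS]
            congr 1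
            refine Finset.sum_congr rfl fun i _ => Finset.sum_congr rfl fun j hj => ?_
            have hij : i < j := (Finset.mem_filter.mp hj).2
            rw [hanti i j hij.ne, norm_neg]
    -- cross part
    have ecross : ∑ i : Fin N, ∑ j ∈ univ.filter (fun j => j ≠ i),
          ∑ k ∈ univ.filter (fun k => k ≠ i ∧ k ≠ j), ⟪F i j, F i k⟫
        = ∑ i : Fin N, ∑ j ∈ univ.filter (fun j => i < j),
            ∑ k ∈ univ.filter (fun k => k ≠ i ∧ k ≠ j), ⟪F i j, F i k - F j k⟫ := by
      calc ∑ i : Fin N, ∑ j ∈ univ.filter (fun j => j ≠ i),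
            ∑ k ∈ univ.filter (fun k => k ≠ i ∧ k ≠ j), ⟪F i j, F i k⟫
          = ∑ i : Fin N, (∑ j ∈ univ.filter (fun j => j < i),
                ∑ k ∈ univ.filter (fun k => k ≠ i ∧ k ≠ j), ⟪F i j, F i k⟫
              + ∑ j ∈ univ.filter (fun j => i < j),
                ∑ k ∈ univ.filter (fun k => k ≠ i ∧ k ≠ j), ⟪F i j, F i k⟫) :=
            Finset.sum_congr rfl fun i _ => mySplitNe univ i _
        _ = ∑ i : Fin N, ∑ j ∈ univ.filter (fun j => j < i),
                ∑ k ∈ univ.filter (fun k => k ≠ i ∧ k ≠ j), ⟪F i j, F i k⟫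
              + ∑ i : Fin N, ∑ j ∈ univ.filter (fun j => i < j),
                ∑ k ∈ univ.filter (fun k => k ≠ i ∧ k ≠ j), ⟪F i j, F i k⟫ :=
            Finset.sum_add_distrib
        _ = ∑ i : Fin N, ∑ j ∈ univ.filter (fun j => i < j),
              (∑ k ∈ univ.filter (fun k => k ≠ j ∧ k ≠ i), ⟪F j i, F j k⟫
                + ∑ k ∈ univ.filter (fun k => k ≠ i ∧ k ≠ j), ⟪F i j, F i k⟫) := by
            rw [mySwapLt univ
              (fun i j => ∑ k ∈ univ.filter (fun k => k ≠ i ∧ k ≠ j), ⟪F i j, F i k⟫),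
              ← Finset.sum_add_distrib]
            exact Finset.sum_congr rfl fun i _ => (Finset.sum_add_distrib).symm
        _ = ∑ i : Fin N, ∑ j ∈ univ.filter (fun j => i < j),
              ∑ k ∈ univ.filter (fun k => k ≠ i ∧ k ≠ j), ⟪F i j, F i k - F j k⟫ := by
            refine Finset.sum_congr rfl fun i _ => Finset.sum_congr rfl fun j hj => ?_
            have hij : i < j := (Finset.mem_filter.mp hj).2
            have hflt : (univ.filter (fun k : Fin N => k ≠ j ∧ k ≠ i))
                = univ.filter (fun k => k ≠ i ∧ k ≠ j) := by
              ext k; simp [and_comm]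
            rw [hflt, ← Finset.sum_add_distrib]
            refine Finset.sum_congr rfl fun k _ => ?_
            rw [hanti i j hij.ne, inner_sub_right]
            simp [inner_neg_left, real_inner_comm (F i j) (F j k)]
            ring
    rw [e3, ediag, ecross]
  -- Step 2: split the cross sum according to the position of k
  have esplit : ∑ i : Fin N, ∑ j ∈ univ.filter (fun j => i < j),
        ∑ k ∈ univ.filter (fun k => k ≠ i ∧ k ≠ j), ⟪F i j, F i k - F j k⟫
      = ∑ i : Fin N, ∑ j ∈ univ.filter (fun j => i < j),
          ∑ k ∈ univ.filter (fun k => k < i), ⟪F i j, F i k - F j k⟫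
        + ∑ i : Fin N, ∑ j ∈ univ.filter (fun j => i < j),
            ∑ k ∈ univ.filter (fun k => i < k ∧ k < j), ⟪F i j, F i k - F j k⟫
        + ∑ i : Fin N, ∑ j ∈ univ.filter (fun j => i < j),
            ∑ k ∈ univ.filter (fun k => j < k), ⟪F i j, F i k - F j k⟫ := by
    calc ∑ i : Fin N, ∑ j ∈ univ.filter (fun j => i < j),
          ∑ k ∈ univ.filter (fun k => k ≠ i ∧ k ≠ j), ⟪F i j, F i k - F j k⟫
        = ∑ i : Fin N, ∑ j ∈ univ.filter (fun j => i < j),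
            (∑ k ∈ univ.filter (fun k => k < i), ⟪F i j, F i k - F j k⟫
              + ∑ k ∈ univ.filter (fun k => i < k ∧ k < j), ⟪F i j, F i k - F j k⟫
              + ∑ k ∈ univ.filter (fun k => j < k), ⟪F i j, F i k - F j k⟫) := by
          refine Finset.sum_congr rfl fun i _ => Finset.sum_congr rfl fun j hj => ?_
          exact mySplitTwoNe univ (Finset.mem_filter.mp hj).2 _
      _ = _ := by simp only [Finset.sum_add_distrib]
  -- Step 3: reindex the two "middle" sums
  have eQ2 : ∑ i : Fin N, ∑ j ∈ univ.filter (fun j => i < j),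
        ∑ k ∈ univ.filter (fun k => i < k ∧ k < j), ⟪F i j, F i k - F j k⟫
      = ∑ a : Fin N, ∑ b ∈ univ.filter (fun b => a < b),
          ∑ c ∈ univ.filter (fun c => b < c), ⟪F a c, F a b - F c b⟫ := by
    simp only [Finset.sum_filter, myIteSum]
    refine Eq.trans (Finset.sum_congr rfl fun i _ => Finset.sum_comm) ?_
    refine Finset.sum_congr rfl fun a _ => Finset.sum_congr rfl fun b _ =>
      Finset.sum_congr rfl fun c _ => ?_
    by_cases hab : a < b <;> by_cases hbc : b < c
    · simp [hab, hbc, hab.trans hbc]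
    · simp [hab, hbc]
    · simp [hab, hbc]
    · simp [hab, hbc]
  have eQ1 : ∑ i : Fin N, ∑ j ∈ univ.filter (fun j => i < j),
        ∑ k ∈ univ.filter (fun k => k < i), ⟪F i j, F i k - F j k⟫
      = ∑ a : Fin N, ∑ b ∈ univ.filter (fun b => a < b),
          ∑ c ∈ univ.filter (fun c => b < c), ⟪F b c, F b a - F c a⟫ := by
    simp only [Finset.sum_filter, myIteSum]
    refine Eq.trans (Finset.sum_congr rfl fun i _ => Finset.sum_comm) ?_
    refine Eq.trans Finset.sum_comm ?_
    refine Finset.sum_congr rfl fun a _ => Finset.sum_congr rfl fun b _ =>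
      Finset.sum_congr rfl fun c _ => ?_
    by_cases hab : a < b <;> by_cases hbc : b < c <;> simp [hab, hbc]
  -- Step 4: per-triple algebraic identity
  have etriple : ∀ a b c : Fin N, a < b → b < c →
      ⟪F b c, F b a - F c a⟫ + ⟪F a c, F a b - F c b⟫ + ⟪F a b, F a c - F b c⟫
        = 2 * ⟪F a b, F a c - F b c⟫ + 2 * ⟪F a c, F b c⟫ := by
    intro a b c hab hbc
    rw [hanti a b hab.ne, hanti a c (hab.trans hbc).ne, hanti b c hbc.ne]
    simp only [inner_sub_right, inner_neg_right, sub_neg_eq_add, inner_add_right]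
    rw [real_inner_comm (F b c) (F a b), real_inner_comm (F b c) (F a c),
      real_inner_comm (F a c) (F a b)]
    ring
  -- Step 5: combine the three reindexed sums
  have ecomb : ∑ a : Fin N, ∑ b ∈ univ.filter (fun b => a < b),
          ∑ c ∈ univ.filter (fun c => b < c), ⟪F b c, F b a - F c a⟫
        + ∑ a : Fin N, ∑ b ∈ univ.filter (fun b => a < b),
            ∑ c ∈ univ.filter (fun c => b < c), ⟪F a c, F a b - F c b⟫
        + ∑ a : Fin N, ∑ b ∈ univ.filter (fun b => a < b),
            ∑ c ∈ univ.filter (fun c => b < c), ⟪F a b, F a c - F b c⟫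
      = 2 * (∑ a : Fin N, ∑ b ∈ univ.filter (fun b => a < b),
            ∑ c ∈ univ.filter (fun c => b < c), ⟪F a b, F a c - F b c⟫)
        + ∑ a : Fin N, ∑ b ∈ univ.filter (fun b => a < b),
            ∑ c ∈ univ.filter (fun c => b < c), 2 * ⟪F a c, F b c⟫ := by
    calc ∑ a : Fin N, ∑ b ∈ univ.filter (fun b => a < b),
            ∑ c ∈ univ.filter (fun c => b < c), ⟪F b c, F b a - F c a⟫
          + ∑ a : Fin N, ∑ b ∈ univ.filter (fun b => a < b),
              ∑ c ∈ univ.filter (fun c => b < c), ⟪F a c, F a b - F c b⟫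
          + ∑ a : Fin N, ∑ b ∈ univ.filter (fun b => a < b),
              ∑ c ∈ univ.filter (fun c => b < c), ⟪F a b, F a c - F b c⟫
        = ∑ a : Fin N, ∑ b ∈ univ.filter (fun b => a < b),
            ∑ c ∈ univ.filter (fun c => b < c),
              (⟪F b c, F b a - F c a⟫ + ⟪F a c, F a b - F c b⟫
                + ⟪F a b, F a c - F b c⟫) := by
          simp only [← Finset.sum_add_distrib]
      _ = ∑ a : Fin N, ∑ b ∈ univ.filter (fun b => a < b),
            ∑ c ∈ univ.filter (fun c => b < c),
              (2 * ⟪F a b, F a c - F b c⟫ + 2 * ⟪F a c, F b c⟫) := by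
          refine Finset.sum_congr rfl fun a _ => Finset.sum_congr rfl fun b hb =>
            Finset.sum_congr rfl fun c hc => ?_
          exact etriple a b c (Finset.mem_filter.mp hb).2 (Finset.mem_filter.mp hc).2
      _ = _ := by
          simp only [Finset.sum_add_distrib]
          rw [Finset.mul_sum]
          congr 1
          refine Finset.sum_congr rfl fun a _ => ?_
          rw [Finset.mul_sum]
          refine Finset.sum_congr rfl fun b _ => ?_
          rw [Finset.mul_sum]
  -- Step 6: lower bound for the M-part
  have hMbound : -(∑ i : Fin N, ∑ j ∈ univ.filter (fun j => i < j),
          ∑ k ∈ univ.filter (fun k => j < k), M i j k)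
      ≤ ∑ a : Fin N, ∑ b ∈ univ.filter (fun b => a < b),
          ∑ c ∈ univ.filter (fun c => b < c), ⟪F a b, F a c - F b c⟫ := by
    have h1 : ∑ a : Fin N, ∑ b ∈ univ.filter (fun b => a < b),
          ∑ c ∈ univ.filter (fun c => b < c), (-(M a b c))
        ≤ ∑ a : Fin N, ∑ b ∈ univ.filter (fun b => a < b),
            ∑ c ∈ univ.filter (fun c => b < c), ⟪F a b, F a c - F b c⟫ := by
      refine Finset.sum_le_sum fun a _ => Finset.sum_le_sum fun b hb =>
        Finset.sum_le_sum fun c hc => ?_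
      exact hM a b c (Finset.mem_filter.mp hb).2 (Finset.mem_filter.mp hc).2
    calc -(∑ i : Fin N, ∑ j ∈ univ.filter (fun j => i < j),
            ∑ k ∈ univ.filter (fun k => j < k), M i j k)
        = ∑ a : Fin N, ∑ b ∈ univ.filter (fun b => a < b),
            ∑ c ∈ univ.filter (fun c => b < c), (-(M a b c)) := by
          simp [Finset.sum_neg_distrib]
      _ ≤ _ := h1
  -- Step 7: lower bound for the C-part
  have hCbound : -S ≤ ∑ a : Fin N, ∑ b ∈ univ.filter (fun b => a < b),
        ∑ c ∈ univ.filter (fun c => b < c), 2 * ⟪F a c, F b c⟫ := by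
    have eC : ∑ a : Fin N, ∑ b ∈ univ.filter (fun b => a < b),
          ∑ c ∈ univ.filter (fun c => b < c), 2 * ⟪F a c, F b c⟫
        = ∑ c : Fin N, 2 * ∑ a ∈ univ.filter (fun a => a < c),
            ∑ b ∈ univ.filter (fun b => b < c ∧ a < b), ⟪F a c, F b c⟫ := by
      simp only [Finset.mul_sum, Finset.sum_filter, myIteSum]
      refine Eq.trans (Finset.sum_congr rfl fun a _ => Finset.sum_comm) ?_
      refine Eq.trans Finset.sum_comm ?_
      refine Finset.sum_congr rfl fun c _ => Finset.sum_congr rfl fun a _ =>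
        Finset.sum_congr rfl fun b _ => ?_
      by_cases hab : a < b <;> by_cases hbc : b < c
      · simp [hab, hbc, hab.trans hbc]
      · simp [hab, hbc]
      · simp [hab, hbc]
      · simp [hab, hbc]
    have eNorm : ∀ c : Fin N,
        2 * ∑ a ∈ univ.filter (fun a => a < c),
            ∑ b ∈ univ.filter (fun b => b < c ∧ a < b), ⟪F a c, F b c⟫
          = ‖∑ a ∈ univ.filter (fun a => a < c), F a c‖ ^ 2
            - ∑ a ∈ univ.filter (fun a => a < c), ‖F a c‖ ^ 2 := by
      intro c
      have h := myNormSumSq (univ.filter (fun a : Fin N => a < c)) (fun a => F a c)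
      simp only [Finset.filter_filter] at h
      linarith
    have eS : ∑ c : Fin N, ∑ a ∈ univ.filter (fun a => a < c), ‖F a c‖ ^ 2 = S := by
      rw [hS]
      exact mySwapLt univ (fun i j => ‖F j i‖ ^ 2)
    calc -S = ∑ c : Fin N, (-(∑ a ∈ univ.filter (fun a => a < c), ‖F a c‖ ^ 2)) := by
          rw [← eS]; simp [Finset.sum_neg_distrib]
      _ ≤ ∑ c : Fin N, (‖∑ a ∈ univ.filter (fun a => a < c), F a c‖ ^ 2
            - ∑ a ∈ univ.filter (fun a => a < c), ‖F a c‖ ^ 2) := by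
          refine Finset.sum_le_sum fun c _ => ?_
          have := sq_nonneg (‖∑ a ∈ univ.filter (fun a => a < c), F a c‖)
          linarith
      _ = ∑ a : Fin N, ∑ b ∈ univ.filter (fun b => a < b),
            ∑ c ∈ univ.filter (fun c => b < c), 2 * ⟪F a c, F b c⟫ := by
          rw [eC]
          exact (Finset.sum_congr rfl fun c _ => (eNorm c)).symm
  -- conclusion
  rw [ge_iff_le, expand, esplit, eQ1, eQ2, ecomb]
  linarith
end

section
/- Let N ≥ 2 and σ ∈ ℝ. There exists a constant η ≥ 0 such that for all pairwise distinct points x^1, …, x^N ∈ ℝ^d, writing F_{ij} = F(x^i − x^j) and L(r) = αA(α − d + 2)/r^{α+2} − βB(β − d + 2)/r^{β+2}, one has (1/N²) ∑_{i=1}^N |∑_{j≠i} F_{ij}|² − (σ²/(2N)) ∑_{1≤i<j≤N} L(|x^i − x^j|) ≥ −η. (This is the regularity condition −|∇Φ|² + (σ²/2)ΔΦ ≤ η for the configuration potential Φ(x) = (1/N)∑_{i<j} V(x^i − x^j).) -/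
open Finset RealInnerProductSpace

/-- The Lennard-Jones force `F(x) = (αA/|x|^{α+1} − βB/|x|^{β+1})·x/|x|` on `ℝ^d`. -/
noncomputable def LJforce (d : ℕ) (A B α β : ℝ) (x : EuclideanSpace ℝ (Fin d)) :
    EuclideanSpace ℝ (Fin d) :=
  ((α * A / ‖x‖ ^ (α + 1) - β * B / ‖x‖ ^ (β + 1)) * ‖x‖⁻¹) • x

/-- The radial profile of the Laplacian of the Lennard-Jones potential in dimension `d`,
`L(r) = αA(α − d + 2)/r^{α+2} − βB(β − d + 2)/r^{β+2}`. -/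
noncomputable def LJlapRad (d : ℕ) (A B α β : ℝ) (r : ℝ) : ℝ :=
  α * A * (α - d + 2) / r ^ (α + 2) - β * B * (β - d + 2) / r ^ (β + 2)

lemma force_norm_le (d : ℕ) (A B α β : ℝ) (hA : 0 < A) (hB : 0 < B) (hβ : 0 ≤ β) (hα : 0 < α)
    (y : EuclideanSpace ℝ (Fin d)) (s : ℝ) (hs : 0 < s) (hsy : s ≤ ‖y‖) :
    ‖LJforce d A B α β y‖ ≤ α * A / s ^ (α + 1) + β * B / s ^ (β + 1) := by
  have hn : (0:ℝ) < ‖y‖ := lt_of_lt_of_le hs hsy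
  have h1 : ‖LJforce d A B α β y‖
      = |α * A / ‖y‖ ^ (α + 1) - β * B / ‖y‖ ^ (β + 1)| := by
    rw [LJforce, norm_smul, Real.norm_eq_abs, abs_mul, abs_inv, abs_norm]
    field_simp
  rw [h1]
  have hP : 0 ≤ α * A / ‖y‖ ^ (α + 1) := by positivity
  have hQ : 0 ≤ β * B / ‖y‖ ^ (β + 1) := by positivity
  have habs : |α * A / ‖y‖ ^ (α + 1) - β * B / ‖y‖ ^ (β + 1)|
      ≤ α * A / ‖y‖ ^ (α + 1) + β * B / ‖y‖ ^ (β + 1) := by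
    rw [abs_sub_comm]
    calc |β * B / ‖y‖ ^ (β + 1) - α * A / ‖y‖ ^ (α + 1)|
        ≤ |β * B / ‖y‖ ^ (β + 1)| + |α * A / ‖y‖ ^ (α + 1)| := abs_sub _ _
      _ = β * B / ‖y‖ ^ (β + 1) + α * A / ‖y‖ ^ (α + 1) := by
          rw [abs_of_nonneg hQ, abs_of_nonneg hP]
      _ = _ := by ring
  refine habs.trans (add_le_add ?_ ?_) <;> gcongr

lemma force_inner_self (d : ℕ) (A B α β : ℝ)
    (y : EuclideanSpace ℝ (Fin d)) (hy : y ≠ 0) :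
    ⟪LJforce d A B α β y, y⟫ = α * A / ‖y‖ ^ α - β * B / ‖y‖ ^ β := by
  have hn : (0:ℝ) < ‖y‖ := norm_pos_iff.mpr hy
  rw [LJforce, real_inner_smul_left, real_inner_self_eq_norm_sq]
  rw [Real.rpow_add hn, Real.rpow_add hn, Real.rpow_one]
  have h1 : ‖y‖ ^ α ≠ 0 := (Real.rpow_pos_of_pos hn α).ne'
  have h2 : ‖y‖ ^ β ≠ 0 := (Real.rpow_pos_of_pos hn β).ne'
  field_simp

lemma force_neg (d : ℕ) (A B α β : ℝ) (y : EuclideanSpace ℝ (Fin d)) :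
    LJforce d A B α β (-y) = -LJforce d A B α β y := by
  simp [LJforce, smul_neg]

lemma small_r (c ε e : ℝ) (hc : 0 ≤ c) (hε : 0 < ε) (he : 0 < e) :
    ∃ t : ℝ, 0 < t ∧ ∀ r : ℝ, 0 < r → r ≤ t → c * r ^ e ≤ ε := by
  refine ⟨(ε / (c + ε)) ^ e⁻¹, Real.rpow_pos_of_pos (by positivity) _, fun r hr hrt => ?_⟩
  have h1 : r ^ e ≤ ((ε / (c + ε)) ^ e⁻¹) ^ e := Real.rpow_le_rpow hr.le hrt he.le
  rw [Real.rpow_inv_rpow (by positivity) he.ne'] at h1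
  calc c * r ^ e ≤ c * (ε / (c + ε)) := by gcongr
    _ ≤ (c + ε) * (ε / (c + ε)) := by gcongr; linarith
    _ = ε := by field_simp

lemma g_lower (A B α β : ℝ) (hA : 0 < A) (hB : 0 < B) (hβ : 0 ≤ β) (hβα : β < α) (hα : 0 < α) :
    ∃ c : ℝ, 0 ≤ c ∧ ∀ s : ℝ, 0 < s → -c ≤ α * A / s ^ α - β * B / s ^ β := by
  rcases eq_or_lt_of_le hβ with hβ0 | hβ0
  · refine ⟨0, le_refl _, fun s hs => ?_⟩
    rw [← hβ0]
    simp
    positivity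
  · set s₁ : ℝ := (α * A / (β * B)) ^ (α - β)⁻¹ with hs₁
    have hs₁pos : 0 < s₁ := Real.rpow_pos_of_pos (by positivity) _
    refine ⟨β * B / s₁ ^ β, by positivity, fun s hs => ?_⟩
    rcases le_total s s₁ with hcase | hcase
    · -- s ≤ s₁ : g(s) ≥ 0
      have hkey : β * B / s ^ β ≤ α * A / s ^ α := by
        have h1 : s ^ (α - β) ≤ α * A / (β * B) := by
          have := Real.rpow_le_rpow hs.le hcase (by linarith : (0:ℝ) ≤ α - β)
          rwa [hs₁, Real.rpow_inv_rpow (by positivity) (by linarith)] at this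
        have hsα : s ^ α = s ^ (α - β) * s ^ β := by
          rw [← Real.rpow_add hs]; ring_nf
        have hβB : 0 < β * B := by positivity
        have h2 : s ^ α * (β * B) ≤ α * A * s ^ β := by
          rw [hsα]
          calc s ^ (α - β) * s ^ β * (β * B) = (s ^ (α - β) * (β * B)) * s ^ β := by ring
            _ ≤ (α * A / (β * B) * (β * B)) * s ^ β := by gcongr
            _ = α * A * s ^ β := by field_simp
        rw [div_le_div_iff₀ (by positivity) (by positivity)]
        nlinarith [Real.rpow_pos_of_pos hs α, Real.rpow_pos_of_pos hs β]
      have : (0:ℝ) ≤ α * A / s ^ α - β * B / s ^ β := by linarith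
      have hc : 0 ≤ β * B / s₁ ^ β := by positivity
      linarith
    · -- s₁ ≤ s
      have h1 : β * B / s ^ β ≤ β * B / s₁ ^ β := by
        gcongr
      have h2 : 0 ≤ α * A / s ^ α := by positivity
      linarith

lemma L_upper (d : ℕ) (A B α β : ℝ) (hβ : 0 ≤ β) (hα : 0 < α) (r s : ℝ) (hr : 0 < r) (hrs : r ≤ s) :
    LJlapRad d A B α β s
      ≤ |α * A * (α - d + 2)| / r ^ (α + 2) + |β * B * (β - d + 2)| / r ^ (β + 2) := by
  have hs : 0 < s := lt_of_lt_of_le hr hrs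
  rw [LJlapRad]
  have h1 : α * A * (α - d + 2) / s ^ (α + 2) ≤ |α * A * (α - d + 2)| / r ^ (α + 2) := by
    rcases le_total 0 (α * A * (α - d + 2)) with h | h
    · rw [abs_of_nonneg h]
      gcongr
    · calc α * A * (α - d + 2) / s ^ (α + 2) ≤ 0 := by
            apply div_nonpos_of_nonpos_of_nonneg h (Real.rpow_pos_of_pos hs _).le
        _ ≤ _ := by positivity
  have h2 : -(β * B * (β - d + 2) / s ^ (β + 2)) ≤ |β * B * (β - d + 2)| / r ^ (β + 2) := by
    rw [← neg_div, ← abs_neg]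
    rcases le_total 0 (-(β * B * (β - d + 2))) with h | h
    · rw [abs_of_nonneg h]
      gcongr
    · calc -(β * B * (β - d + 2)) / s ^ (β + 2) ≤ 0 := by
            apply div_nonpos_of_nonpos_of_nonneg h (Real.rpow_pos_of_pos hs _).le
        _ ≤ _ := by positivity
  linarith

lemma exists_cluster {E : Type*} [NormedAddCommGroup E]
    (N : ℕ) (Λ r : ℝ) (hΛ1 : 1 ≤ Λ) (hr : 0 < r)
    (y : Fin N → E) (a b : Fin N) (hab : a ≠ b) (hyab : ‖y b - y a‖ ≤ r) :
    ∃ (S : Finset (Fin N)) (ρ : ℝ), a ∈ S ∧ b ∈ S ∧ r ≤ ρ ∧ ρ ≤ Λ ^ N * r ∧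
      (∀ p ∈ S, ‖y p - y a‖ ≤ ρ) ∧ (∀ q : Fin N, q ∉ S → Λ * ρ < ‖y q - y a‖) := by
  have hΛ0 : 0 < Λ := lt_of_lt_of_le one_pos hΛ1
  set Sm : ℕ → Finset (Fin N) :=
    fun m => univ.filter (fun k => ‖y k - y a‖ ≤ Λ^m * r) with hSmdef
  have habmem : ∀ m, a ∈ Sm m ∧ b ∈ Sm m := by
    intro m
    have h1 : (1:ℝ) ≤ Λ^m := one_le_pow₀ hΛ1
    constructor
    · simp only [hSmdef, Finset.mem_filter, Finset.mem_univ, true_and, sub_self, norm_zero]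
      positivity
    · simp only [hSmdef, Finset.mem_filter, Finset.mem_univ, true_and]
      refine hyab.trans ?_
      calc r = 1 * r := (one_mul r).symm
        _ ≤ Λ^m * r := by gcongr
  have hmono : ∀ m, Sm m ⊆ Sm (m+1) := by
    intro m k hk
    simp only [hSmdef, Finset.mem_filter, Finset.mem_univ, true_and] at hk ⊢
    refine hk.trans ?_
    have : Λ^m ≤ Λ^(m+1) := pow_le_pow_right₀ hΛ1 (Nat.le_succ m)
    gcongr
  have hpig : ∃ m, m < N ∧ Sm (m+1) = Sm m := by
    by_contra hcon
    push_neg at hcon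
    have grow : ∀ m, m ≤ N → m + 2 ≤ (Sm m).card := by
      intro m
      induction m with
      | zero =>
        intro _
        have h1 : ({a, b} : Finset (Fin N)) ⊆ Sm 0 := by
          intro k hk
          rcases Finset.mem_insert.mp hk with h | h
          · exact h ▸ (habmem 0).1
          · exact (Finset.mem_singleton.mp h) ▸ (habmem 0).2
        calc 0 + 2 = ({a, b} : Finset (Fin N)).card := (Finset.card_pair hab).symm
          _ ≤ (Sm 0).card := Finset.card_le_card h1
      | succ m ih =>
        intro hm
        have h1 : Sm m ⊂ Sm (m+1) :=
          (Finset.ssubset_iff_subset_ne).mpr ⟨hmono m, fun h => hcon m (by omega) (h.symm)⟩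
        have h2 := Finset.card_lt_card h1
        have h3 := ih (by omega)
        omega
    have h4 := grow N le_rfl
    have h5 : (Sm N).card ≤ N := by
      calc (Sm N).card ≤ (univ : Finset (Fin N)).card := Finset.card_filter_le _ _
        _ = N := by simp
    omega
  obtain ⟨m, hmN, hSeq⟩ := hpig
  refine ⟨Sm m, Λ^m * r, (habmem m).1, (habmem m).2, ?_, ?_, ?_, ?_⟩
  · calc r = 1 * r := (one_mul r).symm
      _ ≤ Λ^m * r := by have := one_le_pow₀ (n := m) hΛ1; gcongr
  · have : Λ^m ≤ Λ^N := pow_le_pow_right₀ hΛ1 hmN.le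
    gcongr
  · intro p hp
    exact (Finset.mem_filter.mp hp).2
  · intro q hq
    rw [← hSeq] at hq
    simp only [hSmdef, Finset.mem_filter, Finset.mem_univ, true_and, not_le] at hq
    calc Λ * (Λ^m * r) = Λ^(m+1) * r := by rw [pow_succ]; ring
      _ < ‖y q - y a‖ := hq

set_option maxHeartbeats 1000000 in
lemma cluster_virial (d : ℕ) (A B α β : ℝ) (hA : 0 < A) (hB : 0 < B) (hβ : 0 ≤ β) (hα : 0 < α)
    (N : ℕ) (hN : 2 ≤ N) (c_g : ℝ) (hcg0 : 0 ≤ c_g)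
    (hcg : ∀ s : ℝ, 0 < s → -c_g ≤ α * A / s ^ α - β * B / s ^ β)
    (μ ρ r : ℝ) (hμ1 : 1 ≤ μ) (hμpow : 4 * (N:ℝ)^2 ≤ μ ^ (α+1))
    (x : Fin N → EuclideanSpace ℝ (Fin d))
    (hdist : ∀ i j : Fin N, i ≠ j → x i ≠ x j)
    (a b : Fin N) (hab : a ≠ b) (hrdef : r = ‖x a - x b‖) (hr0 : 0 < r)
    (hmin : ∀ i j : Fin N, i ≠ j → r ≤ ‖x i - x j‖)
    (S : Finset (Fin N)) (haS : a ∈ S) (hbS : b ∈ S)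
    (hρr : r ≤ ρ)
    (h_in : ∀ p ∈ S, ‖x p - x a‖ ≤ ρ)
    (h_sep : ∀ p ∈ S, ∀ q : Fin N, q ∉ S → μ * ρ ≤ ‖x p - x q‖)
    (W : ℝ) (hW0 : 0 ≤ W)
    (hWbd : ∀ i, ‖∑ j ∈ univ.filter (fun j => j ≠ i), LJforce d A B α β (x i - x j)‖ ≤ W) :
    (3/4) * (α*A) / r ^ α ≤ (N:ℝ) * ρ * W + (1 + (N:ℝ)^2) * (β*B) / r ^ β + (N:ℝ)^2 * c_g := by
  have hρ0 : 0 < ρ := lt_of_lt_of_le hr0 hρr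
  have hμρ0 : 0 < μ * ρ := by positivity
  have hNR : (0:ℝ) ≤ N := Nat.cast_nonneg N
  have hcardS : (S.card : ℝ) ≤ N := by
    exact_mod_cast (Finset.card_le_univ S).trans_eq (by simp)
  -- upper bound for the virial
  have hVupper : ∑ p ∈ S, ⟪∑ j ∈ univ.filter (fun j => j ≠ p),
      LJforce d A B α β (x p - x j), x p - x a⟫ ≤ (N:ℝ) * ρ * W := by
    have h1 : ∀ p ∈ S, ⟪∑ j ∈ univ.filter (fun j => j ≠ p),
        LJforce d A B α β (x p - x j), x p - x a⟫ ≤ W * ρ := by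
      intro p hp
      calc ⟪∑ j ∈ univ.filter (fun j => j ≠ p), LJforce d A B α β (x p - x j), x p - x a⟫
          ≤ ‖∑ j ∈ univ.filter (fun j => j ≠ p), LJforce d A B α β (x p - x j)‖
            * ‖x p - x a‖ := real_inner_le_norm _ _
        _ ≤ W * ρ := mul_le_mul (hWbd p) (h_in p hp) (norm_nonneg _) hW0
    calc ∑ p ∈ S, ⟪∑ j ∈ univ.filter (fun j => j ≠ p),
        LJforce d A B α β (x p - x j), x p - x a⟫
        ≤ S.card • (W * ρ) := Finset.sum_le_card_nsmul _ _ _ h1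
      _ = (S.card : ℝ) * (W * ρ) := nsmul_eq_mul _ _
      _ ≤ (N:ℝ) * (W * ρ) := by
          have : (0:ℝ) ≤ W * ρ := by positivity
          exact mul_le_mul_of_nonneg_right hcardS this
      _ = (N:ℝ) * ρ * W := by ring
  -- split the virial into intra- and inter-cluster parts
  have hsplit : ∑ p ∈ S, ⟪∑ j ∈ univ.filter (fun j => j ≠ p),
      LJforce d A B α β (x p - x j), x p - x a⟫ =
      (∑ p ∈ S, ∑ j ∈ (univ.filter (fun j => j ≠ p)).filter (fun j => j ∈ S),
        ⟪LJforce d A B α β (x p - x j), x p - x a⟫) +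
      (∑ p ∈ S, ∑ j ∈ (univ.filter (fun j => j ≠ p)).filter (fun j => j ∉ S),
        ⟪LJforce d A B α β (x p - x j), x p - x a⟫) := by
    rw [← Finset.sum_add_distrib]
    refine Finset.sum_congr rfl fun p _ => ?_
    rw [sum_inner]
    exact (Finset.sum_filter_add_sum_filter_not _ _ _).symm
  -- inter-cluster bound
  have hΞ0 : (0:ℝ) ≤ (α*A/(μ*ρ)^(α+1) + β*B/(μ*ρ)^(β+1)) * ρ := by positivity
  have hInter : -((N:ℝ) * ((N:ℝ) * ((α*A/(μ*ρ)^(α+1) + β*B/(μ*ρ)^(β+1)) * ρ))) ≤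
      ∑ p ∈ S, ∑ j ∈ (univ.filter (fun j => j ≠ p)).filter (fun j => j ∉ S),
        ⟪LJforce d A B α β (x p - x j), x p - x a⟫ := by
    have habs : |∑ p ∈ S, ∑ j ∈ (univ.filter (fun j => j ≠ p)).filter (fun j => j ∉ S),
        ⟪LJforce d A B α β (x p - x j), x p - x a⟫|
        ≤ (N:ℝ) * ((N:ℝ) * ((α*A/(μ*ρ)^(α+1) + β*B/(μ*ρ)^(β+1)) * ρ)) := by
      calc |∑ p ∈ S, ∑ j ∈ (univ.filter (fun j => j ≠ p)).filter (fun j => j ∉ S),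
          ⟪LJforce d A B α β (x p - x j), x p - x a⟫|
          ≤ ∑ p ∈ S, |∑ j ∈ (univ.filter (fun j => j ≠ p)).filter (fun j => j ∉ S),
            ⟪LJforce d A B α β (x p - x j), x p - x a⟫| := Finset.abs_sum_le_sum_abs _ _
        _ ≤ ∑ p ∈ S, (N:ℝ) * ((α*A/(μ*ρ)^(α+1) + β*B/(μ*ρ)^(β+1)) * ρ) := by
            refine Finset.sum_le_sum fun p hp => ?_
            have hterm : ∀ j ∈ (univ.filter (fun j => j ≠ p)).filter (fun j => j ∉ S),
                |⟪LJforce d A B α β (x p - x j), x p - x a⟫|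
                ≤ (α*A/(μ*ρ)^(α+1) + β*B/(μ*ρ)^(β+1)) * ρ := by
              intro j hj
              have hjS : j ∉ S := (Finset.mem_filter.mp hj).2
              calc |⟪LJforce d A B α β (x p - x j), x p - x a⟫|
                  ≤ ‖LJforce d A B α β (x p - x j)‖ * ‖x p - x a‖ :=
                    abs_real_inner_le_norm _ _
                _ ≤ (α*A/(μ*ρ)^(α+1) + β*B/(μ*ρ)^(β+1)) * ρ := by
                    refine mul_le_mul ?_ (h_in p hp) (norm_nonneg _) (by positivity)
                    exact force_norm_le d A B α β hA hB hβ hα _ _ hμρ0 (h_sep p hp j hjS)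
            calc |∑ j ∈ (univ.filter (fun j => j ≠ p)).filter (fun j => j ∉ S),
                ⟪LJforce d A B α β (x p - x j), x p - x a⟫|
                ≤ ∑ j ∈ (univ.filter (fun j => j ≠ p)).filter (fun j => j ∉ S),
                  |⟪LJforce d A B α β (x p - x j), x p - x a⟫| :=
                  Finset.abs_sum_le_sum_abs _ _
              _ ≤ ((univ.filter (fun j => j ≠ p)).filter (fun j => j ∉ S)).card
                  • ((α*A/(μ*ρ)^(α+1) + β*B/(μ*ρ)^(β+1)) * ρ) :=
                  Finset.sum_le_card_nsmul _ _ _ hterm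
              _ = (((univ.filter (fun j => j ≠ p)).filter (fun j => j ∉ S)).card : ℝ)
                  * ((α*A/(μ*ρ)^(α+1) + β*B/(μ*ρ)^(β+1)) * ρ) := nsmul_eq_mul _ _
              _ ≤ (N:ℝ) * ((α*A/(μ*ρ)^(α+1) + β*B/(μ*ρ)^(β+1)) * ρ) := by
                  refine mul_le_mul_of_nonneg_right ?_ hΞ0
                  exact_mod_cast (Finset.card_le_univ _).trans_eq (by simp)
        _ ≤ (N:ℝ) * ((N:ℝ) * ((α*A/(μ*ρ)^(α+1) + β*B/(μ*ρ)^(β+1)) * ρ)) := by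
            rw [Finset.sum_const, nsmul_eq_mul]
            refine mul_le_mul_of_nonneg_right hcardS (by positivity)
    have := neg_abs_le (∑ p ∈ S, ∑ j ∈ (univ.filter (fun j => j ≠ p)).filter (fun j => j ∉ S),
        ⟪LJforce d A B α β (x p - x j), x p - x a⟫)
    linarith
  -- intra-cluster part
  have hμ0 : (0:ℝ) < μ := lt_of_lt_of_le one_pos hμ1
  have hN0 : (0:ℝ) < (N:ℝ) := by exact_mod_cast Nat.lt_of_lt_of_le Nat.zero_lt_two hN
  have hApfilter : ∀ p : Fin N, (univ.filter (fun j => j ≠ p)).filter (fun j => j ∈ S)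
      = S.filter (fun j => j ≠ p) := by
    intro p
    ext j
    simp only [Finset.mem_filter, Finset.mem_univ, true_and]
    tauto
  have hIntra_eq : (∑ p ∈ S, ∑ j ∈ (univ.filter (fun j => j ≠ p)).filter (fun j => j ∈ S),
      ⟪LJforce d A B α β (x p - x j), x p - x a⟫)
      = ∑ z ∈ (S ×ˢ S).filter (fun z : Fin N × Fin N => z.2 ≠ z.1),
        ⟪LJforce d A B α β (x z.1 - x z.2), x z.1 - x a⟫ := by
    calc (∑ p ∈ S, ∑ j ∈ (univ.filter (fun j => j ≠ p)).filter (fun j => j ∈ S),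
        ⟪LJforce d A B α β (x p - x j), x p - x a⟫)
        = ∑ p ∈ S, ∑ j ∈ S.filter (fun j => j ≠ p),
          ⟪LJforce d A B α β (x p - x j), x p - x a⟫ := by
          exact Finset.sum_congr rfl fun p _ => by rw [hApfilter p]
      _ = ∑ p ∈ S, ∑ j ∈ S, if j ≠ p then ⟪LJforce d A B α β (x p - x j), x p - x a⟫ else 0 :=
          Finset.sum_congr rfl fun p _ => Finset.sum_filter _ _
      _ = ∑ z ∈ S ×ˢ S, if z.2 ≠ z.1 then ⟪LJforce d A B α β (x z.1 - x z.2), x z.1 - x a⟫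
          else 0 := (Finset.sum_product (s := S) (t := S)
            (f := fun z : Fin N × Fin N =>
              if z.2 ≠ z.1 then ⟪LJforce d A B α β (x z.1 - x z.2), x z.1 - x a⟫ else 0)).symm
      _ = _ := (Finset.sum_filter _ _).symm
  have hswap : (∑ z ∈ (S ×ˢ S).filter (fun z : Fin N × Fin N => z.2 ≠ z.1),
        ⟪LJforce d A B α β (x z.1 - x z.2), x z.1 - x a⟫)
      = ∑ z ∈ (S ×ˢ S).filter (fun z : Fin N × Fin N => z.2 ≠ z.1),
        ⟪LJforce d A B α β (x z.2 - x z.1), x z.2 - x a⟫ := by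
    refine Finset.sum_nbij' (fun z => (z.2, z.1)) (fun z => (z.2, z.1)) ?_ ?_ ?_ ?_ ?_
    · intro z hz
      simp only [Finset.mem_filter, Finset.mem_product] at hz ⊢
      tauto
    · intro z hz
      simp only [Finset.mem_filter, Finset.mem_product] at hz ⊢
      tauto
    · intro z _
      rfl
    · intro z _
      rfl
    · intro z _
      rfl
  have hpair : ∀ z : Fin N × Fin N, z ∈ (S ×ˢ S).filter (fun z : Fin N × Fin N => z.2 ≠ z.1) →
      ⟪LJforce d A B α β (x z.1 - x z.2), x z.1 - x a⟫
        + ⟪LJforce d A B α β (x z.2 - x z.1), x z.2 - x a⟫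
      = α*A/‖x z.1 - x z.2‖^α - β*B/‖x z.1 - x z.2‖^β := by
    intro z hz
    have hne : z.2 ≠ z.1 := (Finset.mem_filter.mp hz).2
    have hy : x z.1 - x z.2 ≠ 0 := sub_ne_zero.mpr (hdist _ _ hne.symm)
    have h1 : x z.2 - x z.1 = -(x z.1 - x z.2) := by abel
    rw [h1, force_neg, inner_neg_left, ← sub_eq_add_neg, ← inner_sub_right,
      ← force_inner_self d A B α β _ hy]
    congr 1
    abel
  have hDcard : (((S ×ˢ S).filter (fun z : Fin N × Fin N => z.2 ≠ z.1)).card : ℝ)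
      ≤ (N:ℝ)^2 := by
    have h1 : ((S ×ˢ S).filter (fun z : Fin N × Fin N => z.2 ≠ z.1)).card ≤ S.card * S.card := by
      calc ((S ×ˢ S).filter (fun z : Fin N × Fin N => z.2 ≠ z.1)).card
          ≤ (S ×ˢ S).card := Finset.card_filter_le _ _
        _ = S.card * S.card := Finset.card_product _ _
    calc (((S ×ˢ S).filter (fun z : Fin N × Fin N => z.2 ≠ z.1)).card : ℝ)
        ≤ (S.card : ℝ) * (S.card : ℝ) := by exact_mod_cast h1
      _ ≤ (N:ℝ) * (N:ℝ) := mul_le_mul hcardS hcardS (Nat.cast_nonneg _) hNR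
      _ = (N:ℝ)^2 := by ring
  have hgsum : 2*(α*A/r^α - β*B/r^β) + 2*c_g - (N:ℝ)^2*c_g
      ≤ ∑ z ∈ (S ×ˢ S).filter (fun z : Fin N × Fin N => z.2 ≠ z.1),
        (α*A/‖x z.1 - x z.2‖^α - β*B/‖x z.1 - x z.2‖^β) := by
    have habne : ((a, b) : Fin N × Fin N) ≠ (b, a) := fun h => hab (congrArg Prod.fst h)
    have hDsub : ({(a,b), (b,a)} : Finset (Fin N × Fin N))
        ⊆ (S ×ˢ S).filter (fun z : Fin N × Fin N => z.2 ≠ z.1) := by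
      intro z hz
      rcases Finset.mem_insert.mp hz with h | h
      · subst h
        simp only [Finset.mem_filter, Finset.mem_product]
        exact ⟨⟨haS, hbS⟩, hab.symm⟩
      · rw [Finset.mem_singleton.mp h]
        simp only [Finset.mem_filter, Finset.mem_product]
        exact ⟨⟨hbS, haS⟩, hab⟩
    have hnn : ∀ z ∈ (S ×ˢ S).filter (fun z : Fin N × Fin N => z.2 ≠ z.1),
        0 ≤ (α*A/‖x z.1 - x z.2‖^α - β*B/‖x z.1 - x z.2‖^β) + c_g := by
      intro z hz
      have hne : z.2 ≠ z.1 := (Finset.mem_filter.mp hz).2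
      have hy : (0:ℝ) < ‖x z.1 - x z.2‖ :=
        norm_pos_iff.mpr (sub_ne_zero.mpr (hdist _ _ hne.symm))
      have := hcg _ hy
      linarith
    have h2 : ∑ z ∈ ({(a,b), (b,a)} : Finset (Fin N × Fin N)),
        ((α*A/‖x z.1 - x z.2‖^α - β*B/‖x z.1 - x z.2‖^β) + c_g)
        ≤ ∑ z ∈ (S ×ˢ S).filter (fun z : Fin N × Fin N => z.2 ≠ z.1),
        ((α*A/‖x z.1 - x z.2‖^α - β*B/‖x z.1 - x z.2‖^β) + c_g) :=
      Finset.sum_le_sum_of_subset_of_nonneg hDsub (fun z hz _ => hnn z hz)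
    have h3 : ∑ z ∈ ({(a,b), (b,a)} : Finset (Fin N × Fin N)),
        ((α*A/‖x z.1 - x z.2‖^α - β*B/‖x z.1 - x z.2‖^β) + c_g)
        = 2*(α*A/r^α - β*B/r^β) + 2*c_g := by
      rw [Finset.sum_pair habne]
      have e1 : ‖x b - x a‖ = r := by rw [norm_sub_rev, hrdef]
      have e2 : ‖x a - x b‖ = r := hrdef.symm
      simp only [e1, e2]
      ring
    have h4 : ∑ z ∈ (S ×ˢ S).filter (fun z : Fin N × Fin N => z.2 ≠ z.1),
        ((α*A/‖x z.1 - x z.2‖^α - β*B/‖x z.1 - x z.2‖^β) + c_g)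
        = (∑ z ∈ (S ×ˢ S).filter (fun z : Fin N × Fin N => z.2 ≠ z.1),
          (α*A/‖x z.1 - x z.2‖^α - β*B/‖x z.1 - x z.2‖^β))
          + (((S ×ˢ S).filter (fun z : Fin N × Fin N => z.2 ≠ z.1)).card : ℝ) * c_g := by
      rw [Finset.sum_add_distrib, Finset.sum_const, nsmul_eq_mul]
    have h5 : (((S ×ˢ S).filter (fun z : Fin N × Fin N => z.2 ≠ z.1)).card : ℝ) * c_g
        ≤ (N:ℝ)^2 * c_g := mul_le_mul_of_nonneg_right hDcard hcg0
    rw [h3, h4] at h2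
    linarith
  have hIntra_lower : (α*A/r^α - β*B/r^β) - (N:ℝ)^2 * c_g
      ≤ ∑ p ∈ S, ∑ j ∈ (univ.filter (fun j => j ≠ p)).filter (fun j => j ∈ S),
        ⟪LJforce d A B α β (x p - x j), x p - x a⟫ := by
    have hdouble : 2 * (∑ p ∈ S, ∑ j ∈ (univ.filter (fun j => j ≠ p)).filter (fun j => j ∈ S),
        ⟪LJforce d A B α β (x p - x j), x p - x a⟫)
        = ∑ z ∈ (S ×ˢ S).filter (fun z : Fin N × Fin N => z.2 ≠ z.1),
          (α*A/‖x z.1 - x z.2‖^α - β*B/‖x z.1 - x z.2‖^β) := by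
      rw [two_mul, hIntra_eq]
      nth_rewrite 2 [hswap]
      rw [← Finset.sum_add_distrib]
      exact Finset.sum_congr rfl hpair
    have hN2cg : (0:ℝ) ≤ (N:ℝ)^2 * c_g := by positivity
    linarith
  -- the inter-cluster error is small
  have hrα : (0:ℝ) < r^α := Real.rpow_pos_of_pos hr0 _
  have hrβ : (0:ℝ) < r^β := Real.rpow_pos_of_pos hr0 _
  have hΞbd : (N:ℝ) * ((N:ℝ) * ((α*A/(μ*ρ)^(α+1) + β*B/(μ*ρ)^(β+1)) * ρ))
      ≤ (1/4)*(α*A)/r^α + (N:ℝ)^2*(β*B)/r^β := by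
    have e1 : (μ*ρ)^(α+1) = μ^(α+1) * (ρ^α * ρ) := by
      rw [Real.mul_rpow hμ0.le hρ0.le, Real.rpow_add hρ0, Real.rpow_one]
    have e2 : (μ*ρ)^(β+1) = μ^(β+1) * (ρ^β * ρ) := by
      rw [Real.mul_rpow hμ0.le hρ0.le, Real.rpow_add hρ0, Real.rpow_one]
    have hρα : r^α ≤ ρ^α := Real.rpow_le_rpow hr0.le hρr hα.le
    have hρβ : r^β ≤ ρ^β := Real.rpow_le_rpow hr0.le hρr hβ
    have hρα0 : (0:ℝ) < ρ^α := Real.rpow_pos_of_pos hρ0 _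
    have hρβ0 : (0:ℝ) < ρ^β := Real.rpow_pos_of_pos hρ0 _
    have hμα0 : (0:ℝ) < μ^(α+1) := Real.rpow_pos_of_pos hμ0 _
    have hμβ0 : (0:ℝ) < μ^(β+1) := Real.rpow_pos_of_pos hμ0 _
    have hμβ : (1:ℝ) ≤ μ^(β+1) := by
      calc (1:ℝ) = μ^(0:ℝ) := (Real.rpow_zero μ).symm
        _ ≤ μ^(β+1) := Real.rpow_le_rpow_of_exponent_le hμ1 (by linarith)
    have key1 : (N:ℝ)^2 * (α*A) * ρ / ((μ^(α+1) * (ρ^α * ρ))) ≤ (1/4)*(α*A)/r^α := by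
      have s1 : (N:ℝ)^2 * (α*A) * ρ / ((μ^(α+1) * (ρ^α * ρ)))
          = (N:ℝ)^2 * (α*A) / (μ^(α+1) * ρ^α) := by
        field_simp
      have s2 : (N:ℝ)^2 * (α*A) / (μ^(α+1) * ρ^α)
          ≤ (N:ℝ)^2 * (α*A) / ((4*(N:ℝ)^2) * r^α) := by
        gcongr
      have s3 : (N:ℝ)^2 * (α*A) / ((4*(N:ℝ)^2) * r^α) = (1/4)*(α*A)/r^α := by
        rw [div_eq_div_iff (by positivity) (by positivity)]
        ring
      rw [s1]
      exact s2.trans_eq s3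
    have key2 : (N:ℝ)^2 * (β*B) * ρ / ((μ^(β+1) * (ρ^β * ρ))) ≤ (N:ℝ)^2*(β*B)/r^β := by
      have s1 : (N:ℝ)^2 * (β*B) * ρ / ((μ^(β+1) * (ρ^β * ρ)))
          = (N:ℝ)^2 * (β*B) / (μ^(β+1) * ρ^β) := by
        field_simp
      have s2 : (N:ℝ)^2 * (β*B) / (μ^(β+1) * ρ^β) ≤ (N:ℝ)^2 * (β*B) / (1 * r^β) := by
        gcongr
      have s3 : (N:ℝ)^2 * (β*B) / (1 * r^β) = (N:ℝ)^2*(β*B)/r^β := by rw [one_mul]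
      rw [s1]
      exact s2.trans_eq s3
    calc (N:ℝ) * ((N:ℝ) * ((α*A/(μ*ρ)^(α+1) + β*B/(μ*ρ)^(β+1)) * ρ))
        = (N:ℝ)^2 * (α*A) * ρ / (μ*ρ)^(α+1) + (N:ℝ)^2 * (β*B) * ρ / (μ*ρ)^(β+1) := by
          ring
      _ = (N:ℝ)^2 * (α*A) * ρ / ((μ^(α+1) * (ρ^α * ρ)))
          + (N:ℝ)^2 * (β*B) * ρ / ((μ^(β+1) * (ρ^β * ρ))) := by rw [e1, e2]
      _ ≤ (1/4)*(α*A)/r^α + (N:ℝ)^2*(β*B)/r^β := add_le_add key1 key2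
  -- put everything together
  rw [hsplit] at hVupper
  have hglue1 : (1 + (N:ℝ)^2)*(β*B)/r^β = β*B/r^β + (N:ℝ)^2*(β*B)/r^β := by ring
  have hglue2 : (3/4)*(α*A)/r^α = α*A/r^α - (1/4)*(α*A)/r^α := by ring
  linarith

lemma Lsum_bound (d : ℕ) (A B α β : ℝ) (hβ : 0 ≤ β) (hα : 0 < α) (N : ℕ)
    (x : Fin N → EuclideanSpace ℝ (Fin d)) (rr : ℝ) (hrr : 0 < rr)
    (hminrr : ∀ i j : Fin N, i ≠ j → rr ≤ ‖x i - x j‖) :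
    ∑ i : Fin N, ∑ j ∈ univ.filter (fun j => i < j), LJlapRad d A B α β ‖x i - x j‖
      ≤ (N:ℝ) * ((N:ℝ) *
        (|α * A * (α - d + 2)| / rr ^ (α + 2) + |β * B * (β - d + 2)| / rr ^ (β + 2))) := by
  have hb0 : (0:ℝ) ≤ |α * A * (α - d + 2)| / rr ^ (α + 2)
      + |β * B * (β - d + 2)| / rr ^ (β + 2) := by
    have h1 : (0:ℝ) < rr ^ (α+2) := Real.rpow_pos_of_pos hrr _
    have h2 : (0:ℝ) < rr ^ (β+2) := Real.rpow_pos_of_pos hrr _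
    positivity
  have hinner : ∀ i : Fin N, ∑ j ∈ univ.filter (fun j => i < j), LJlapRad d A B α β ‖x i - x j‖
      ≤ (N:ℝ) * (|α * A * (α - d + 2)| / rr ^ (α + 2)
        + |β * B * (β - d + 2)| / rr ^ (β + 2)) := by
    intro i
    calc ∑ j ∈ univ.filter (fun j => i < j), LJlapRad d A B α β ‖x i - x j‖
        ≤ (univ.filter (fun j => i < j)).card • (|α * A * (α - d + 2)| / rr ^ (α + 2)
          + |β * B * (β - d + 2)| / rr ^ (β + 2)) := by
          refine Finset.sum_le_card_nsmul _ _ _ fun j hj => ?_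
          have hij : i ≠ j := ne_of_lt (Finset.mem_filter.mp hj).2
          exact L_upper d A B α β hβ hα rr _ hrr (hminrr i j hij)
      _ = ((univ.filter (fun j => i < j)).card : ℝ) * _ := nsmul_eq_mul _ _
      _ ≤ (N:ℝ) * _ := by
          refine mul_le_mul_of_nonneg_right ?_ hb0
          exact_mod_cast (Finset.card_filter_le _ _).trans_eq (by simp)
  calc ∑ i : Fin N, ∑ j ∈ univ.filter (fun j => i < j), LJlapRad d A B α β ‖x i - x j‖
      ≤ (univ : Finset (Fin N)).card • ((N:ℝ) * (|α * A * (α - d + 2)| / rr ^ (α + 2)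
        + |β * B * (β - d + 2)| / rr ^ (β + 2))) :=
        Finset.sum_le_card_nsmul _ _ _ fun i _ => hinner i
    _ = ((univ : Finset (Fin N)).card : ℝ) * _ := nsmul_eq_mul _ _
    _ = (N:ℝ) * ((N:ℝ) * _) := by rw [Finset.card_univ, Fintype.card_fin]

set_option maxHeartbeats 1000000 in
/-- for `N ≥ 2` and `σ ∈ ℝ`, there is `η ≥ 0` such that for all pairwise distinct
configurations, `(1/N²) ∑ᵢ |∑_{j≠i} F_{ij}|² − (σ²/(2N)) ∑_{i<j} L(|xⁱ−xʲ|) ≥ −η`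
(the regularity condition `−|∇Φ|² + (σ²/2)ΔΦ ≤ η` for `Φ = (1/N)∑_{i<j} V(xⁱ−xʲ)`). -/
theorem LJ_configuration_regularity (d : ℕ) (hd : 1 ≤ d) (A B α β : ℝ)
    (hA : 0 < A) (hB : 0 < B) (hβ : 0 ≤ β) (hβα : β < α) (hα : 0 < α)
    (N : ℕ) (hN : 2 ≤ N) (σ : ℝ) :
    ∃ η ≥ (0 : ℝ), ∀ x : Fin N → EuclideanSpace ℝ (Fin d),
      (∀ i j : Fin N, i ≠ j → x i ≠ x j) →
      (1 / (N : ℝ) ^ 2) *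
          ∑ i : Fin N, ‖∑ j ∈ univ.filter (fun j => j ≠ i), LJforce d A B α β (x i - x j)‖ ^ 2 -
        (σ ^ 2 / (2 * N)) * ∑ i : Fin N, ∑ j ∈ univ.filter (fun j => i < j),
          LJlapRad d A B α β ‖x i - x j‖ ≥ -η := by
  obtain ⟨c_g, hcg0, hcg⟩ := g_lower A B α β hA hB hβ hβα hα
  have hN0 : (0:ℝ) < N := by
    have : 0 < N := by omega
    exact_mod_cast this
  obtain ⟨μ, hμ1, hμpow⟩ : ∃ μ : ℝ, 1 ≤ μ ∧ 4*(N:ℝ)^2 ≤ μ^(α+1) := by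
    refine ⟨max 1 ((4*(N:ℝ)^2) ^ (α+1)⁻¹), le_max_left _ _, ?_⟩
    calc 4*(N:ℝ)^2 = ((4*(N:ℝ)^2) ^ (α+1)⁻¹) ^ (α+1) :=
        (Real.rpow_inv_rpow (by positivity) (by linarith)).symm
      _ ≤ _ := Real.rpow_le_rpow (by positivity) (le_max_right _ _) (by linarith)
  have hμ0 : (0:ℝ) < μ := lt_of_lt_of_le one_pos hμ1
  obtain ⟨Q, hQdef⟩ : ∃ q : ℝ, q = (N:ℝ) * (1+μ)^N := ⟨_, rfl⟩
  have hQ0 : (0:ℝ) < Q := by rw [hQdef]; positivity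
  obtain ⟨κ, hκdef⟩ : ∃ k : ℝ, k = (α*A/(2*Q))^2/(N:ℝ)^2 := ⟨_, rfl⟩
  have hκ0 : (0:ℝ) < κ := by rw [hκdef]; positivity
  obtain ⟨D₁, hD₁def⟩ : ∃ y : ℝ, y = σ^2 * N * |α * A * (α - d + 2)| / 2 := ⟨_, rfl⟩
  obtain ⟨D₂, hD₂def⟩ : ∃ y : ℝ, y = σ^2 * N * |β * B * (β - d + 2)| / 2 := ⟨_, rfl⟩
  have hD₁0 : 0 ≤ D₁ := by rw [hD₁def]; positivity
  have hD₂0 : 0 ≤ D₂ := by rw [hD₂def]; positivity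
  obtain ⟨t₁, ht₁0, ht₁⟩ := small_r ((1+(N:ℝ)^2)*(β*B)) (α*A/8) (α-β)
    (by positivity) (by positivity) (by linarith)
  obtain ⟨t₂, ht₂0, ht₂⟩ := small_r ((N:ℝ)^2*c_g) (α*A/8) α (by positivity) (by positivity) hα
  obtain ⟨t₃, ht₃0, ht₃⟩ := small_r D₁ (κ/2) α hD₁0 (by positivity) hα
  obtain ⟨t₄, ht₄0, ht₄⟩ := small_r D₂ (κ/2) (2*α-β) hD₂0 (by positivity) (by linarith)
  obtain ⟨r₀, hr₀def⟩ : ∃ y : ℝ, y = min (min t₁ t₂) (min t₃ t₄) := ⟨_, rfl⟩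
  have hr₀0 : 0 < r₀ := by
    rw [hr₀def, lt_min_iff, lt_min_iff, lt_min_iff]
    exact ⟨⟨ht₁0, ht₂0⟩, ⟨ht₃0, ht₄0⟩⟩
  have hr₀1 : r₀ ≤ t₁ := hr₀def ▸ (min_le_left _ _).trans (min_le_left _ _)
  have hr₀2 : r₀ ≤ t₂ := hr₀def ▸ (min_le_left _ _).trans (min_le_right _ _)
  have hr₀3 : r₀ ≤ t₃ := hr₀def ▸ (min_le_right _ _).trans (min_le_left _ _)
  have hr₀4 : r₀ ≤ t₄ := hr₀def ▸ (min_le_right _ _).trans (min_le_right _ _)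
  have hrp1 : (0:ℝ) < r₀ ^ (α+2) := Real.rpow_pos_of_pos hr₀0 _
  have hrp2 : (0:ℝ) < r₀ ^ (β+2) := Real.rpow_pos_of_pos hr₀0 _
  refine ⟨D₁ / r₀ ^ (α+2) + D₂ / r₀ ^ (β+2),
    add_nonneg (div_nonneg hD₁0 hrp1.le) (div_nonneg hD₂0 hrp2.le), ?_⟩
  intro x hdist
  -- minimal pair
  have hPne : ((univ ×ˢ univ).filter (fun p : Fin N × Fin N => p.1 ≠ p.2)).Nonempty := by
    refine ⟨(⟨0, by omega⟩, ⟨1, by omega⟩), ?_⟩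
    simp only [Finset.mem_filter, Finset.mem_product, Finset.mem_univ, true_and]
    intro h
    simpa using congrArg Fin.val h
  obtain ⟨p₀, hp₀mem, hp₀min⟩ :=
    Finset.exists_min_image _ (fun p : Fin N × Fin N => ‖x p.1 - x p.2‖) hPne
  obtain ⟨a, b⟩ := p₀
  have hab : a ≠ b := (Finset.mem_filter.mp hp₀mem).2
  obtain ⟨r, hrdef⟩ : ∃ y : ℝ, y = ‖x a - x b‖ := ⟨_, rfl⟩
  have hr : 0 < r := hrdef ▸ norm_pos_iff.mpr (sub_ne_zero.mpr (hdist a b hab))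
  have hmin : ∀ i j : Fin N, i ≠ j → r ≤ ‖x i - x j‖ := by
    intro i j hij
    rw [hrdef]
    exact hp₀min (i, j) (by simp [Finset.mem_filter, hij])
  -- W
  set W : ℝ := Real.sqrt (∑ i : Fin N,
    ‖∑ j ∈ univ.filter (fun j => j ≠ i), LJforce d A B α β (x i - x j)‖ ^ 2) with hWdef
  have hW0 : 0 ≤ W := Real.sqrt_nonneg _
  have hWsq : W^2 = ∑ i : Fin N,
      ‖∑ j ∈ univ.filter (fun j => j ≠ i), LJforce d A B α β (x i - x j)‖ ^ 2 :=
    Real.sq_sqrt (Finset.sum_nonneg fun i _ => sq_nonneg _)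
  have hWbd : ∀ i : Fin N,
      ‖∑ j ∈ univ.filter (fun j => j ≠ i), LJforce d A B α β (x i - x j)‖ ≤ W := by
    intro i
    rw [hWdef]
    have h := Real.sqrt_le_sqrt (Finset.single_le_sum
      (f := fun i : Fin N => ‖∑ j ∈ univ.filter (fun j => j ≠ i), LJforce d A B α β (x i - x j)‖ ^ 2)
      (fun j _ => sq_nonneg _) (Finset.mem_univ i))
    rwa [Real.sqrt_sq (norm_nonneg _)] at h
  -- cluster
  obtain ⟨S, ρ, haS, hbS, hρr, hρΛ, h_in, h_out⟩ :=
    exists_cluster N (1+μ) r (by linarith) hr x a b hab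
      (by rw [norm_sub_rev, hrdef])
  have hρ0 : 0 < ρ := lt_of_lt_of_le hr hρr
  have h_sep : ∀ p ∈ S, ∀ q : Fin N, q ∉ S → μ * ρ ≤ ‖x p - x q‖ := by
    intro p hp q hq
    have h1 := h_out q hq
    have h2 := h_in p hp
    have h3 : ‖x q - x a‖ ≤ ‖x q - x p‖ + ‖x p - x a‖ := by
      calc ‖x q - x a‖ = ‖(x q - x p) + (x p - x a)‖ := by
            congr 1
            abel
        _ ≤ _ := norm_add_le _ _
    have h4 : ‖x p - x q‖ = ‖x q - x p‖ := norm_sub_rev _ _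
    have h5 : (1+μ)*ρ = ρ + μ*ρ := by ring
    linarith only [h1, h2, h3, h4, h5]
  have key := cluster_virial d A B α β hA hB hβ hα N hN c_g hcg0 hcg μ ρ r hμ1 hμpow
    x hdist a b hab hrdef hr hmin S haS hbS hρr h_in h_sep W hW0 hWbd
  have key2 : (3/4)*(α*A)/r^α ≤ Q*r*W + (1+(N:ℝ)^2)*(β*B)/r^β + (N:ℝ)^2*c_g := by
    have h5 : (N:ℝ)*ρ*W ≤ Q*r*W := by
      calc (N:ℝ)*ρ*W ≤ (N:ℝ)*((1+μ)^N*r)*W :=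
            mul_le_mul_of_nonneg_right (mul_le_mul_of_nonneg_left hρΛ (Nat.cast_nonneg N)) hW0
        _ = Q*r*W := by rw [hQdef]; ring
    linarith only [key, h5]
  -- bound on the Laplacian sum
  have hLmul : ∀ rr : ℝ, 0 < rr → (∀ i j : Fin N, i ≠ j → rr ≤ ‖x i - x j‖) →
      σ^2/(2*(N:ℝ)) * (∑ i : Fin N, ∑ j ∈ univ.filter (fun j => i < j),
        LJlapRad d A B α β ‖x i - x j‖) ≤ D₁/rr^(α+2) + D₂/rr^(β+2) := by
    intro rr h1 h2
    have h3 := Lsum_bound d A B α β hβ hα N x rr h1 h2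
    have h4 : (0:ℝ) ≤ σ^2/(2*(N:ℝ)) := by positivity
    have h5 : (0:ℝ) < rr ^ (α+2) := Real.rpow_pos_of_pos h1 _
    have h6 : (0:ℝ) < rr ^ (β+2) := Real.rpow_pos_of_pos h1 _
    calc σ^2/(2*(N:ℝ)) * (∑ i : Fin N, ∑ j ∈ univ.filter (fun j => i < j),
          LJlapRad d A B α β ‖x i - x j‖)
        ≤ σ^2/(2*(N:ℝ)) * ((N:ℝ) * ((N:ℝ) *
          (|α * A * (α - d + 2)| / rr ^ (α + 2) + |β * B * (β - d + 2)| / rr ^ (β + 2)))) :=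
          mul_le_mul_of_nonneg_left h3 h4
      _ = D₁/rr^(α+2) + D₂/rr^(β+2) := by
          rw [hD₁def, hD₂def]
          field_simp
  rcases le_total r r₀ with hcase | hcase
  · -- the singular regime : the gradient term dominates
    have ht₁' := ht₁ r hr (hcase.trans hr₀1)
    have ht₂' := ht₂ r hr (hcase.trans hr₀2)
    have ht₃' := ht₃ r hr (hcase.trans hr₀3)
    have ht₄' := ht₄ r hr (hcase.trans hr₀4)
    have hrα0 : (0:ℝ) < r^α := Real.rpow_pos_of_pos hr _
    have hrβ0 : (0:ℝ) < r^β := Real.rpow_pos_of_pos hr _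
    have hrX0 : (0:ℝ) < r^((α+1)*2) := Real.rpow_pos_of_pos hr _
    have e6 : (1+(N:ℝ)^2)*(β*B)/r^β ≤ (α*A/8)/r^α := by
      have hrab0 : (0:ℝ) < r^(α-β) := Real.rpow_pos_of_pos hr _
      have eα : r^α = r^(α-β) * r^β := by
        rw [← Real.rpow_add hr]
        congr 1
        ring
      have h7 : ((1+(N:ℝ)^2)*(β*B)) * r^(α-β) / r^α = (1+(N:ℝ)^2)*(β*B)/r^β := by
        rw [eα, mul_comm ((1+(N:ℝ)^2)*(β*B)) (r^(α-β)), mul_div_mul_left _ _ hrab0.ne']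
      rw [← h7]
      exact (div_le_div_iff_of_pos_right hrα0).mpr ht₁'
    have e7 : (N:ℝ)^2*c_g ≤ (α*A/8)/r^α := by
      rw [le_div_iff₀ hrα0]
      exact ht₂'
    have e8 : (α*A/2)/r^α ≤ Q*r*W := by
      have egl : (3/4)*(α*A)/r^α - (α*A/8)/r^α - (α*A/8)/r^α = (α*A/2)/r^α := by ring
      linarith only [key2, e6, e7, egl]
    have e9 : (α*A/(2*Q))/r^(α+1) ≤ W := by
      have h8 : (0:ℝ) < Q*r := by positivity
      have hrα1 : (0:ℝ) < r^(α+1) := Real.rpow_pos_of_pos hr _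
      have h9 : (α*A/(2*Q))/r^(α+1) = ((α*A/2)/r^α)/(Q*r) := by
        rw [Real.rpow_add hr, Real.rpow_one]
        field_simp
      rw [h9, div_le_iff₀ h8]
      have h15 : W*(Q*r) = Q*r*W := by ring
      linarith only [e8, h15]
    have e10 : ((α*A/(2*Q))/r^(α+1))^2 ≤ W^2 := by
      have h10 : 0 ≤ (α*A/(2*Q))/r^(α+1) := by positivity
      exact pow_le_pow_left₀ h10 e9 2
    have e11 : ((α*A/(2*Q))/r^(α+1))^2 = (α*A/(2*Q))^2 / r^((α+1)*2) := by
      rw [div_pow, ← Real.rpow_natCast (r^(α+1)) 2, ← Real.rpow_mul hr.le]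
      norm_num
    have e12 : κ / r^((α+1)*2) ≤ 1/(N:ℝ)^2 * W^2 := by
      rw [e11] at e10
      calc κ / r^((α+1)*2) = 1/(N:ℝ)^2 * ((α*A/(2*Q))^2 / r^((α+1)*2)) := by
            rw [hκdef]; ring
        _ ≤ 1/(N:ℝ)^2 * W^2 := by
            apply mul_le_mul_of_nonneg_left e10 (by positivity)
    have e13 : D₁/r^(α+2) ≤ (κ/2)/r^((α+1)*2) := by
      have eX : r^((α+1)*2) = r^α * r^(α+2) := by
        rw [← Real.rpow_add hr]
        congr 1
        ring
      have h11 : D₁ * r^α / r^((α+1)*2) = D₁ / r^(α+2) := by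
        rw [eX, mul_comm D₁ (r^α), mul_div_mul_left _ _ hrα0.ne']
      rw [← h11]
      exact (div_le_div_iff_of_pos_right hrX0).mpr ht₃'
    have e14 : D₂/r^(β+2) ≤ (κ/2)/r^((α+1)*2) := by
      have hr2ab0 : (0:ℝ) < r^(2*α-β) := Real.rpow_pos_of_pos hr _
      have eX2 : r^((α+1)*2) = r^(2*α-β) * r^(β+2) := by
        rw [← Real.rpow_add hr]
        congr 1
        ring
      have h12 : D₂ * r^(2*α-β) / r^((α+1)*2) = D₂ / r^(β+2) := by
        rw [eX2, mul_comm D₂ (r^(2*α-β)), mul_div_mul_left _ _ hr2ab0.ne']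
      rw [← h12]
      exact (div_le_div_iff_of_pos_right hrX0).mpr ht₄'
    have e15 := hLmul r hr hmin
    have hsplitκ : κ/r^((α+1)*2) = (κ/2)/r^((α+1)*2) + (κ/2)/r^((α+1)*2) := by ring
    have hη0 : (0:ℝ) ≤ D₁/r₀^(α+2) + D₂/r₀^(β+2) :=
      add_nonneg (div_nonneg hD₁0 hrp1.le) (div_nonneg hD₂0 hrp2.le)
    rw [ge_iff_le, ← hWsq]
    linarith only [e12, e13, e14, e15, hsplitκ, hη0]
  · -- away from the singularity : the Laplacian term is bounded
    have e15 := hLmul r₀ hr₀0 (fun i j hij => hcase.trans (hmin i j hij))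
    have hSG0 : (0:ℝ) ≤ (1 / (N : ℝ) ^ 2) *
        ∑ i : Fin N, ‖∑ j ∈ univ.filter (fun j => j ≠ i), LJforce d A B α β (x i - x j)‖ ^ 2 :=
      mul_nonneg (by positivity) (Finset.sum_nonneg fun i _ => sq_nonneg _)
    linarith only [e15, hSG0]
end
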